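/- arXiv:2601.17972 — 2 statements merged into one kernel-verified Lean document; each statement's English description precedes it below -/
import Mathlib

section
/- Let $t \ge 2$ be an integer, $\Delta > 0$, and let $v : \{0, 1, \dots, t\} \to \mathbb{R}$ satisfy $v_0 = 0$ and $|v_{s+u} - v_s - v_u| \le \Delta$ for all integers $s, u \ge 1$ with $s + u \le t$. Then for every integer $1 \le s \le t$ we have $|v_s - s \cdot v_t / t| \le 3\Delta$. -/
/-!
Subtracting the linear part turns `v` into an approximately additive `f` with `f t = 0`.
For `2 s ≤ t` write `t = q s + r` with `q ≥ 2` and `r < s`: then `f (q s) ≈ q f s` up to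
`(q - 1) Δ`, while `f (q s) ≈ -f r` up to `Δ`, so strong induction gives `|f s| ≤ 2 Δ`.
For `2 s > t` the complement `t - s` falls in that range and `f s ≈ -f (t - s)` up to `Δ`.
-/

def ApproxAdditiveOn (t : ℕ) (Δ : ℝ) (f : ℕ → ℝ) : Prop :=
  ∀ s u : ℕ, 1 ≤ s → 1 ≤ u → s + u ≤ t → |f (s + u) - f s - f u| ≤ Δ

namespace ApproxAdditiveOn

variable {t : ℕ} {Δ : ℝ} {f : ℕ → ℝ}

theorem sub_linear (hf : ApproxAdditiveOn t Δ f) (c : ℝ) :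
    ApproxAdditiveOn t Δ (fun s => f s - s * c) := by
  intro s u hs hu hsu
  convert hf s u hs hu hsu using 2
  push_cast
  ring

theorem abs_mul_sub_le (hf : ApproxAdditiveOn t Δ f) {q s : ℕ} (hq : 1 ≤ q) (hs : 1 ≤ s)
    (hqs : q * s ≤ t) : |f (q * s) - q * f s| ≤ (q - 1) * Δ := by
  induction q, hq using Nat.le_induction with
  | base => simp
  | succ k hk ih =>
    rw [Nat.succ_mul] at hqs ⊢
    have hstep := abs_le.mp (hf (k * s) s (Nat.mul_pos hk hs) hs hqs)
    have hprev := abs_le.mp (ih (le_trans (Nat.le_add_right _ _) hqs))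
    push_cast
    exact abs_le.mpr ⟨by linarith [hstep.1, hprev.1], by linarith [hstep.2, hprev.2]⟩

theorem abs_le_add_abs_of_add_eq (hf : ApproxAdditiveOn t Δ f) (htop : f t = 0) {s u : ℕ}
    (hs : 1 ≤ s) (hu : 1 ≤ u) (hsu : s + u = t) : |f s| ≤ Δ + |f u| := by
  have h := hf s u hs hu hsu.le
  rw [hsu, htop] at h
  have h' := abs_le.mp h
  exact abs_le.mpr ⟨by linarith [le_abs_self (f u)], by linarith [neg_abs_le (f u)]⟩

theorem abs_le_two_mul (hf : ApproxAdditiveOn t Δ f) (htop : f t = 0) (hΔ : 0 ≤ Δ) :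
    ∀ s : ℕ, 1 ≤ s → 2 * s ≤ t → |f s| ≤ 2 * Δ := by
  intro s
  induction s using Nat.strong_induction_on with
  | _ s ih =>
    intro hs h2s
    set q := t / s
    set r := t % s
    have hdiv : q * s + r = t := Nat.div_add_mod' t s
    have hq : 2 ≤ q := (Nat.le_div_iff_mul_le hs).mpr h2s
    have hqs : 1 ≤ q * s := Nat.mul_pos (by omega) hs
    have hfq : |f (q * s)| ≤ 3 * Δ := by
      rcases Nat.eq_zero_or_pos r with hr | hr
      · rw [show q * s = t by omega, htop, abs_zero]
        positivity
      · have hrs : r < s := Nat.mod_lt t hs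
        linarith [hf.abs_le_add_abs_of_add_eq htop hqs hr hdiv, ih r hrs hr (by omega)]
    have hmul := hf.abs_mul_sub_le (by omega) hs (by omega : q * s ≤ t)
    have hqR : (2 : ℝ) ≤ q := by exact_mod_cast hq
    have hbound : (q : ℝ) * |f s| ≤ (q + 2) * Δ := by
      rw [← Nat.abs_cast q, ← abs_mul, Nat.abs_cast]
      linarith [abs_sub_abs_le_abs_sub ((q : ℝ) * f s) (f (q * s)),
        abs_sub_comm (f (q * s)) (q * f s)]
    nlinarith [abs_nonneg (f s)]

theorem abs_le_three_mul (hf : ApproxAdditiveOn t Δ f) (htop : f t = 0) (hΔ : 0 ≤ Δ)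
    {s : ℕ} (hs : 1 ≤ s) (hst : s ≤ t) : |f s| ≤ 3 * Δ := by
  rcases le_or_gt (2 * s) t with h2s | h2s
  · linarith [hf.abs_le_two_mul htop hΔ s hs h2s]
  rcases hst.eq_or_lt with rfl | hlt
  · rw [htop, abs_zero]
    positivity
  · linarith [hf.abs_le_add_abs_of_add_eq htop hs (by omega : 1 ≤ t - s) (by omega),
      hf.abs_le_two_mul htop hΔ (t - s) (by omega) (by omega)]

end ApproxAdditiveOn

theorem stmt_2_general (t : ℕ) (Δ : ℝ) (hΔ : 0 < Δ) (v : ℕ → ℝ)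
    (hadd : ∀ s u : ℕ, 1 ≤ s → 1 ≤ u → s + u ≤ t → |v (s + u) - v s - v u| ≤ Δ) :
    ∀ s : ℕ, 1 ≤ s → s ≤ t → |v s - (s : ℝ) * v t / t| ≤ 3 * Δ := by
  intro s hs hst
  have ht : (t : ℝ) ≠ 0 := Nat.cast_ne_zero.mpr (by omega)
  have hlin : ApproxAdditiveOn t Δ (fun s => v s - s * (v t / t)) :=
    ApproxAdditiveOn.sub_linear (f := v) hadd (v t / t)
  have htop : v t - t * (v t / t) = 0 := by rw [mul_div_cancel₀ _ ht, sub_self]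
  simpa only [mul_div_assoc] using hlin.abs_le_three_mul htop hΔ.le hs hst

/-- an approximately additive sequence is approximately linear. -/
theorem stmt_2 (t : ℕ) (ht : 2 ≤ t) (Δ : ℝ) (hΔ : 0 < Δ) (v : ℕ → ℝ)
    (h0 : v 0 = 0)
    (hadd : ∀ s u : ℕ, 1 ≤ s → 1 ≤ u → s + u ≤ t → |v (s + u) - v s - v u| ≤ Δ) :
    ∀ s : ℕ, 1 ≤ s → s ≤ t → |v s - (s : ℝ) * v t / t| ≤ 3 * Δ :=
  stmt_2_general t Δ hΔ v hadd
end

section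
/- Let $(\Omega, \mathcal{F}, (\mathcal{F}_t)_{t \in \mathbb{N}}, \mathbb{P})$ be a filtered probability space, and let $M_1, \dots, M_k$ be adapted processes with values in $[0,1]$, each of which is a supermartingale with respect to $(\mathcal{F}_t)$. Suppose that for every $t \in \mathbb{N}$ there is an $\mathcal{F}_t$-measurable random index $J_t \in \{1, \dots, k\}$ such that almost surely $M_i(t+1) = M_i(t)$ for all $i \ne J_t$. Then the product process $M(t) := \prod_{j=1}^k M_j(t)$ is a supermartingale with respect to $(\mathcal{F}_t)$. -/
open MeasureTheory Finset
open scoped BigOperators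

/-! Write `P t = ∏ i, M i t`. On the `ℱ t`-measurable event `{J t = j}` only the `j`-th factor
moves, so `P (t+1) = ∑ j, W j * M j (t+1)` almost surely with the weights
`W j = 𝟙{J t = j} * ∏ i ≠ j, M i t`, which are `ℱ t`-measurable and lie in `[0,1]`. Conditioning
on `ℱ t` pulls the weights out, and the supermartingale property of each `M j` gives
`𝔼[P (t+1) | ℱ t] ≤ ∑ j, W j * M j t = P t`. -/

theorem Finset.prod_eq_sum_ite_prod_erase_mul {ι R : Type*} [Fintype ι] [DecidableEq ι]
    [CommSemiring R] {a b : ι → R} (j₀ : ι) (h : ∀ i, i ≠ j₀ → b i = a i) :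
    ∏ i, b i = ∑ j, (if j₀ = j then ∏ i ∈ univ.erase j, a i else 0) * b j := by
  simp only [ite_mul, zero_mul, sum_ite_eq, mem_univ, if_true]
  rw [← prod_erase_mul univ b (mem_univ j₀)]
  congr 1
  exact prod_congr rfl fun i hi => h i (ne_of_mem_erase hi)

namespace MeasureTheory

variable {Ω ι : Type*} [Preorder ι] {m0 : MeasurableSpace Ω} {μ : Measure Ω}
  {ℱ : Filtration ι m0} {i j : ι} {C : ℝ}

theorem Supermartingale.condExp_mul_le {f : ι → Ω → ℝ} (hf : Supermartingale f ℱ μ)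
    (hij : i ≤ j) {g : Ω → ℝ} (hg : StronglyMeasurable[ℱ i] g) (hg_nonneg : 0 ≤ g)
    (hg_le : ∀ ω, g ω ≤ C) :
    μ[g * f j | ℱ i] ≤ᵐ[μ] g * f i := by
  have hprod : Integrable (g * f j) μ :=
    (hf.integrable j).bdd_mul (hg.mono (ℱ.le i)).aestronglyMeasurable
      (ae_of_all _ fun ω => (Real.norm_of_nonneg (hg_nonneg ω)).trans_le (hg_le ω))
  filter_upwards [condExp_mul_of_stronglyMeasurable_left hg hprod (hf.integrable j),
    hf.condExp_ae_le hij] with ω h_pull h_sup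
  rw [h_pull]
  exact mul_le_mul_of_nonneg_left h_sup (hg_nonneg ω)

theorem condExp_sum_mul_le_of_supermartingale {κ : Type*} (s : Finset κ)
    {f : κ → ι → Ω → ℝ} (hf : ∀ a, Supermartingale (f a) ℱ μ) (hij : i ≤ j)
    {g : κ → Ω → ℝ} (hg : ∀ a, StronglyMeasurable[ℱ i] (g a)) (hg_nonneg : ∀ a, 0 ≤ g a)
    (hg_le : ∀ a ω, g a ω ≤ C) :
    μ[∑ a ∈ s, g a * f a j | ℱ i] ≤ᵐ[μ] ∑ a ∈ s, g a * f a i := by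
  have hint : ∀ a ∈ s, Integrable (g a * f a j) μ := fun a _ =>
    ((hf a).integrable j).bdd_mul ((hg a).mono (ℱ.le i)).aestronglyMeasurable
      (ae_of_all _ fun ω => (Real.norm_of_nonneg (hg_nonneg a ω)).trans_le (hg_le a ω))
  have hterm : ∀ᵐ ω ∂μ, ∀ a ∈ s, μ[g a * f a j | ℱ i] ω ≤ (g a * f a i) ω :=
    (Filter.eventually_all_finset s).2 fun a _ =>
      (hf a).condExp_mul_le hij (hg a) (hg_nonneg a) (hg_le a)
  filter_upwards [condExp_finsetSum hint (ℱ i), hterm] with ω h_sum h_le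
  rw [h_sum, Finset.sum_apply, Finset.sum_apply]
  exact sum_le_sum h_le

end MeasureTheory

/-- a product of `[0,1]`-valued supermartingales, at most one of which
(chosen measurably at time `t`) can change in each step, is a supermartingale. -/
theorem stmt_5 {Ω : Type*} {m0 : MeasurableSpace Ω} {μ : Measure Ω}
    [IsProbabilityMeasure μ] (ℱ : Filtration ℕ m0) (k : ℕ)
    (M : Fin k → ℕ → Ω → ℝ)
    (hsup : ∀ i, Supermartingale (M i) ℱ μ)
    (hbdd : ∀ i t ω, M i t ω ∈ Set.Icc (0 : ℝ) 1)
    (J : ℕ → Ω → Fin k)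
    (hJmeas : ∀ t, Measurable[ℱ t] (J t))
    (hfreeze : ∀ t, ∀ᵐ ω ∂μ, ∀ i, i ≠ J t ω → M i (t + 1) ω = M i t ω) :
    Supermartingale (fun t ω => ∏ i, M i t ω) ℱ μ := by
  have hadapted : StronglyAdapted ℱ fun t ω => ∏ i, M i t ω := fun t =>
    stronglyMeasurable_fun_prod _ fun i _ => (hsup i).stronglyAdapted t
  have hP_mem : ∀ t ω, ∏ i, M i t ω ∈ Set.Icc (0 : ℝ) 1 := fun t ω =>
    unitInterval.prod_mem fun i _ => hbdd i t ω
  refine supermartingale_nat hadapted (fun t => Integrable.of_bound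
    ((hadapted t).mono (ℱ.le t)).aestronglyMeasurable 1 (ae_of_all _ fun ω =>
      (Real.norm_of_nonneg (hP_mem t ω).1).trans_le (hP_mem t ω).2)) fun t => ?_
  set W : Fin k → Ω → ℝ := fun j ω => if J t ω = j then ∏ i ∈ univ.erase j, M i t ω else 0
  have hW_mem : ∀ j ω, W j ω ∈ Set.Icc (0 : ℝ) 1 := fun j ω => by
    by_cases hj : J t ω = j
    · simpa only [W, if_pos hj] using unitInterval.prod_mem fun i (_ : i ∈ univ.erase j) =>
        hbdd i t ω
    · simp only [W, if_neg hj, Set.left_mem_Icc, zero_le_one]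
  have hW_meas : ∀ j, StronglyMeasurable[ℱ t] (W j) := fun j =>
    StronglyMeasurable.ite (hJmeas t (measurableSet_singleton j))
      (stronglyMeasurable_fun_prod _ fun i _ => (hsup i).stronglyAdapted t)
      stronglyMeasurable_const
  have h_next : (fun ω => ∏ i, M i (t + 1) ω) =ᵐ[μ] ∑ j, W j * M j (t + 1) := by
    filter_upwards [hfreeze t] with ω hω
    simpa only [Finset.sum_apply, Pi.mul_apply] using prod_eq_sum_ite_prod_erase_mul (J t ω) hω
  have h_now : (fun ω => ∏ i, M i t ω) = ∑ j, W j * M j t := funext fun ω => by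
    simpa only [Finset.sum_apply, Pi.mul_apply] using
      prod_eq_sum_ite_prod_erase_mul (b := fun i => M i t ω) (J t ω) fun _ _ => rfl
  rw [h_now]
  exact (condExp_congr_ae h_next).trans_le <| condExp_sum_mul_le_of_supermartingale univ hsup
    t.le_succ hW_meas (fun j ω => (hW_mem j ω).1) fun j ω => (hW_mem j ω).2
end
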